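/- arXiv:2010.03208 — 8 statements merged into one kernel-verified Lean document; each statement's English description precedes it below -/
import Mathlib

section
/- Let G = A × F be a topological direct product, where A is an abelian topological group and F is a finite (discrete) group. If A is minimal, then G is c-minimal. -/
/-! Let `H ≤ A × F` be closed and `σ` a Hausdorff group topology on `H` coarser than the subspace
topology. As `F` is compact, the projection `π : H → A` is proper, so every cluster point of
`π(𝓝_σ 1)` lifts to a cluster point of `𝓝_σ 1`, which can only be `1`. Hence the group topology on
`A` with neighbourhoods of `1` the sets `U * π(V)` (`U ∈ 𝓝 1`, `V ∈ 𝓝_σ 1`) is Hausdorff; it is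
coarser than the topology of `A`, so by minimality it is that topology, and `π` is σ-continuous.
Then `H ∩ (A × {1})` is σ-closed, hence σ-open because it has finite index, so the projection to
`F` is σ-continuous as well and `σ` is finer than the subspace topology. -/

open Filter Topology
open scoped Manifold

universe u

/-- A topological group `(G, t)` is *minimal* if every Hausdorff group topology on `G`
coarser than `t` coincides with `t`.  (Recall that in Mathlib `t ≤ t'` means that `t'` is
coarser than `t`, i.e. every `t'`-open set is `t`-open.) -/
def IsMinimalGroup (G : Type u) [Group G] [t : TopologicalSpace G] : Prop :=
  ∀ t' : TopologicalSpace G, t ≤ t' → @IsTopologicalGroup G t' _ → @T2Space G t' → t' = t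

/-- A topological group is *c-minimal* if every closed subgroup (with the subspace
topology) is minimal. -/
def IsCMinimalGroup (G : Type u) [Group G] [TopologicalSpace G] : Prop :=
  ∀ H : Subgroup G, IsClosed (H : Set G) → IsMinimalGroup H

open Pointwise

abbrev Filter.toGroupFilterBasis {A : Type*} [CommGroup A] (𝓕 : Filter A) (h1 : pure 1 ≤ 𝓕)
    (hmul : 𝓕 * 𝓕 ≤ 𝓕) (hinv : 𝓕⁻¹ ≤ 𝓕) : GroupFilterBasis A :=
  _root_.groupFilterBasisOfComm 𝓕.sets ⟨Set.univ, univ_mem⟩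
    (fun _ _ hs ht ↦ ⟨_, inter_mem hs ht, subset_rfl⟩) (fun _ hs ↦ h1 hs)
    (fun _ hs ↦ by
      obtain ⟨t₁, h₁, t₂, h₂, hsub⟩ := mem_mul.1 (hmul hs)
      exact ⟨t₁ ∩ t₂, inter_mem h₁ h₂,
        (Set.mul_subset_mul Set.inter_subset_left Set.inter_subset_right).trans hsub⟩)
    (fun _ hs ↦ ⟨_, hinv hs, subset_rfl⟩)

theorem Filter.nhds_one_toGroupFilterBasis {A : Type*} [CommGroup A] (𝓕 : Filter A)
    (h1 : pure 1 ≤ 𝓕) (hmul : 𝓕 * 𝓕 ≤ 𝓕) (hinv : 𝓕⁻¹ ≤ 𝓕) :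
    @nhds A (𝓕.toGroupFilterBasis h1 hmul hinv).topology 1 = 𝓕 :=
  (𝓕.toGroupFilterBasis h1 hmul hinv).nhds_one_hasBasis.eq_of_same_basis 𝓕.basis_sets

theorem IsTopologicalGroup.le_of_nhds_one_le {G : Type*} [Group G] {t t' : TopologicalSpace G}
    (tg : @IsTopologicalGroup G t _) (tg' : @IsTopologicalGroup G t' _)
    (h : @nhds G t 1 ≤ @nhds G t' 1) : t ≤ t' :=
  le_of_nhds_le_nhds fun x ↦ by
    rw [← @nhds_translation_mul_inv G t _ _ x, ← @nhds_translation_mul_inv G t' _ _ x]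
    exact comap_mono h

theorem IsMinimalGroup.eq_nhds_one_of_nhds_one_le {A : Type u} [CommGroup A]
    [tA : TopologicalSpace A] [IsTopologicalGroup A] (hA : IsMinimalGroup A) (𝓕 : Filter A)
    (h_one : pure 1 ≤ 𝓕) (h_mul : 𝓕 * 𝓕 ≤ 𝓕) (h_inv : 𝓕⁻¹ ≤ 𝓕) (h_le : 𝓝 1 ≤ 𝓕)
    (h_sep : ∀ a, pure a ≤ 𝓕 → a = 1) : 𝓕 = 𝓝 1 := by
  set B := 𝓕.toGroupFilterBasis h_one h_mul h_inv
  have hB : @nhds A B.topology 1 = 𝓕 := 𝓕.nhds_one_toGroupFilterBasis h_one h_mul h_inv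
  have hB_le : tA ≤ B.topology :=
    IsTopologicalGroup.le_of_nhds_one_le inferInstance B.isTopologicalGroup (hB ▸ h_le)
  have hB_T2 : @T2Space A B.topology := by
    refine @IsTopologicalGroup.t2Space_of_one_sep A B.topology _ B.isTopologicalGroup fun a ha ↦ ?_
    by_contra! h
    exact ha (h_sep a fun U hU ↦ h U (hB ▸ hU))
  rw [← hB, hA _ hB_le B.isTopologicalGroup hB_T2]

theorem IsMinimalGroup.continuous_of_mapClusterPt {A : Type u} [CommGroup A]
    [TopologicalSpace A] [IsTopologicalGroup A] (hA : IsMinimalGroup A) {G : Type*} [Group G]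
    [TopologicalSpace G] [IsTopologicalGroup G] (π : G →* A)
    (hπ : ∀ a, MapClusterPt a (𝓝 1) π → a = 1) : Continuous π := by
  set ℱ := map π (𝓝 1)
  have hℱ_one : pure 1 ≤ ℱ := by simpa using map_mono (m := π) (pure_le_nhds (1 : G))
  have hℱ_mul : ℱ * ℱ = ℱ := by rw [← Filter.map_mul, nhds_mul_nhds_one]
  have hℱ_inv : ℱ⁻¹ = ℱ := by rw [← Filter.map_inv', ← nhds_inv, inv_one]
  have h𝓕 := hA.eq_nhds_one_of_nhds_one_le (𝓝 1 * ℱ)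
    (le_mul_of_le_of_one_le (pure_le_nhds 1) hℱ_one)
    (by rw [mul_mul_mul_comm, nhds_mul_nhds_one, hℱ_mul])
    (by rw [mul_inv_rev, hℱ_inv, ← nhds_inv, inv_one, mul_comm])
    (le_mul_of_one_le_right' hℱ_one) ?_
  · refine continuous_of_continuousAt_one π ?_
    rw [ContinuousAt, map_one, ← h𝓕]
    exact le_mul_of_one_le_left' (pure_le_nhds 1)
  · intro a ha
    refine hπ a (mapClusterPt_iff_frequently.2 fun W hW ↦ frequently_iff.2 fun {V} hV ↦ ?_)
    have hU : (fun u ↦ a * u⁻¹) ⁻¹' W ∈ 𝓝 1 :=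
      (continuous_const.mul continuous_inv).tendsto' 1 a (by simp) hW
    obtain ⟨u, hu, _, ⟨g, hg, rfl⟩, rfl⟩ := ha (mul_mem_mul hU (image_mem_map hV))
    exact ⟨g, hg, by simpa [mul_inv_cancel_comm] using hu⟩

theorem IsMinimalGroup.continuous_of_isProperMap {A : Type u} [CommGroup A] [TopologicalSpace A]
    [IsTopologicalGroup A] (hA : IsMinimalGroup A) {G : Type*} [Group G] [tG : TopologicalSpace G]
    {π : G →* A} (hπ : IsProperMap π) (σ : TopologicalSpace G) (hσ_le : tG ≤ σ)
    (hσ : @IsTopologicalGroup G σ _) (hσT2 : @T2Space G σ) : Continuous[σ, _] π := by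
  refine hA.continuous_of_mapClusterPt π fun a ha ↦ ?_
  obtain ⟨g, rfl, hg⟩ := @IsProperMap.clusterPt_of_mapClusterPt G A tG _ π hπ _ _ ha
  rw [eq_of_nhds_neBot (NeBot.mono hg (inf_le_inf_right _ (nhds_mono hσ_le))), map_one]

theorem MonoidHom.continuous_of_isOpen_ker {G K : Type*} [Group G] [TopologicalSpace G]
    [IsTopologicalGroup G] [Group K] [TopologicalSpace K] [DiscreteTopology K] (f : G →* K)
    (hf : IsOpen (f.ker : Set G)) : Continuous f :=
  continuous_of_continuousAt_one f <| by
    rw [ContinuousAt, map_one, nhds_discrete K, tendsto_pure]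
    exact hf.mem_nhds f.ker.one_mem

theorem Subgroup.isClosed_ker_snd_of_continuous_fst {A F : Type*} [Group A] [Group F]
    [TopologicalSpace A] [TopologicalSpace F] {H : Subgroup (A × F)}
    (hH : IsClosed (H : Set (A × F))) {σ : TopologicalSpace H}
    (hτσ : instTopologicalSpaceSubtype ≤ σ) (hσ : @T2Space H σ)
    (hfst : Continuous[σ, _] ((MonoidHom.fst A F).comp H.subtype)) :
    IsClosed[σ] (((MonoidHom.snd A F).comp H.subtype).ker : Set H) := by
  set N := ((MonoidHom.snd A F).comp H.subtype).ker
  refine @isClosed_of_closure_subset H σ _ fun x hx ↦ ?_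
  set 𝓖 := @nhds H σ x ⊓ 𝓟 N
  have : NeBot 𝓖 := @mem_closure_iff_clusterPt H σ _ _ |>.1 hx
  -- Points of `N` near `x` are `(π h, 1)` with `π h → π x`, so they converge to `(π x, 1)` in the
  -- subspace topology, hence also in `σ`.
  have hlim : Tendsto (fun h : H ↦ (h : A × F)) 𝓖 (𝓝 ((x : A × F).1, 1)) :=
    ((hfst.tendsto x).mono_left inf_le_left).prodMk_nhds <|
      tendsto_const_nhds.congr' <| Eventually.mono
        (mem_inf_of_right (mem_principal_self (N : Set H))) fun h hh ↦ (MonoidHom.mem_ker.1 hh).symm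
  have hmem : ((x : A × F).1, (1 : F)) ∈ H := hH.mem_of_tendsto hlim (.of_forall fun h ↦ h.2)
  have hx_eq : x = ⟨_, hmem⟩ := @tendsto_nhds_unique H _ σ hσ id 𝓖 x _ _ inf_le_left
    ((tendsto_subtype_rng.2 hlim).mono_right (nhds_mono hτσ))
  rw [hx_eq]
  rfl

theorem prod_minimal_abelian_finite_cminimal_general {A : Type u} [CommGroup A] [TopologicalSpace A]
    [IsTopologicalGroup A] {F : Type u} [Group F] [Finite F] [TopologicalSpace F]
    [DiscreteTopology F] (hA : IsMinimalGroup A) : IsCMinimalGroup (A × F) := by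
  intro H hH
  set fst := (MonoidHom.fst A F).comp H.subtype
  set snd := (MonoidHom.snd A F).comp H.subtype
  -- Properness refers to the subspace topology, which `σ` shadows as instance once introduced.
  have hfst := hA.continuous_of_isProperMap (π := fst)
    (isProperMap_fst_of_compactSpace.comp hH.isProperMap_subtypeVal)
  intro σ hτσ hσ hσT2
  specialize hfst σ hτσ hσ hσT2
  have hsnd : Continuous snd := snd.continuous_of_isOpen_ker <|
    snd.ker.isOpen_of_isClosed_of_finiteIndex <|
      Subgroup.isClosed_ker_snd_of_continuous_fst hH hτσ hσT2 hfst
  exact le_antisymm (continuous_iff_le_induced.1 (hfst.prodMk hsnd)) hτσ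

/-- If `A` is a minimal abelian topological group and `F` a finite discrete
group, then `A × F` is c-minimal. -/
theorem prod_minimal_abelian_finite_cminimal {A : Type u} [CommGroup A] [TopologicalSpace A]
    [IsTopologicalGroup A] [T2Space A] {F : Type u} [Group F] [Finite F] [TopologicalSpace F]
    [DiscreteTopology F] (hA : IsMinimalGroup A) : IsCMinimalGroup (A × F) :=
  prod_minimal_abelian_finite_cminimal_general hA
end

section
/- Let G = A × F be a topological direct product, where A is an abelian topological group and F is a finite (discrete) group. If A is totally minimal, then G is c-totally minimal. -/
open Filter Topology
open scoped Manifold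

universe u

/-- A topological group is *totally minimal* if every continuous surjective group
homomorphism onto a Hausdorff topological group is an open map. -/
def IsTotallyMinimalGroup (G : Type u) [Group G] [TopologicalSpace G] : Prop :=
  ∀ (H : Type u) [Group H] [TopologicalSpace H] [IsTopologicalGroup H] [T2Space H]
    (f : G →* H), Continuous f → Function.Surjective f → IsOpenMap f

/-- A topological group is *c-totally minimal* if every closed subgroup (with the
subspace topology) is totally minimal. -/
def IsCTotallyMinimalGroup (G : Type u) [Group G] [TopologicalSpace G] : Prop :=
  ∀ H : Subgroup G, IsClosed (H : Set G) → IsTotallyMinimalGroup H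

/-!
Let `H ≤ A × F` be closed and `f : H → K` a continuous surjection onto a Hausdorff group. The
projection `ψ : H → A` is proper with finite kernel, so `Φ = f(ker ψ)` is a finite normal
subgroup and `K ⧸ Φ`, a quotient of `ψ(H) ≤ A`, is abelian. Gluing `A` and `K ⧸ Φ` along `H`,
i.e. dividing `A × K ⧸ Φ` by the closed subgroup `{(ψ h, f h Φ)}`, yields a Hausdorff quotient
of `A`. Total minimality of `A` makes it open, which says that `H → K ⧸ Φ` is open, and since
`Φ` is finite this lifts to `f`.
-/

open Set
open scoped Pointwise

lemma exists_mem_nhds_one_eq_of_inv_mul_mem_finite {K : Type*} [Group K] [TopologicalSpace K]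
    [IsTopologicalGroup K] [T1Space K] {Φ : Set K} (hΦ : Φ.Finite) :
    ∃ V ∈ 𝓝 (1 : K), ∀ x ∈ V, ∀ y ∈ V, x⁻¹ * y ∈ Φ → x = y := by
  have hW : (Φ \ {1})ᶜ ∈ 𝓝 (1 : K) :=
    (hΦ.subset sdiff_subset).isClosed.isOpen_compl.mem_nhds (by simp)
  have hdiv : Tendsto (fun p : K × K => p.1⁻¹ * p.2) (𝓝 1 ×ˢ 𝓝 1) (𝓝 1) := by
    rw [← nhds_prod_eq]
    exact (continuous_fst.inv.mul continuous_snd).tendsto' _ _ (by simp)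
  obtain ⟨V, hV, hVW⟩ := (eventually_prod_self_iff (r := fun x y => x⁻¹ * y ∈ (Φ \ {1})ᶜ)).mp
    (hdiv.eventually_mem hW)
  refine ⟨V, hV, fun x hx y hy hxy => ?_⟩
  by_contra hne
  exact hVW x hx y hy ⟨hxy, by simpa [inv_mul_eq_one] using hne⟩

lemma MonoidHom.isOpenMap_of_isOpenMap_mk'_comp {H K : Type*} [Group H] [TopologicalSpace H]
    [IsTopologicalGroup H] [Group K] [TopologicalSpace K] [IsTopologicalGroup K] [T1Space K]
    {f : H →* K} (hf : Continuous f) {Φ : Subgroup K} [Φ.Normal] (hΦ : (Φ : Set K).Finite)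
    (hopen : IsOpenMap ((QuotientGroup.mk' Φ).comp f)) : IsOpenMap f := by
  rw [IsTopologicalGroup.isOpenMap_iff_nhds_one, Filter.le_map_iff]
  intro U hU
  obtain ⟨V, hV, hVΦ⟩ := exists_mem_nhds_one_eq_of_inv_mul_mem_finite hΦ
  have hUV : f ⁻¹' V ∩ U ∈ 𝓝 1 :=
    inter_mem (hf.continuousAt.preimage_mem_nhds (by rwa [map_one])) hU
  have himage := Filter.le_map_iff.mp (IsTopologicalGroup.isOpenMap_iff_nhds_one.mp hopen) _ hUV
  have hsat : QuotientGroup.mk ⁻¹' (((QuotientGroup.mk' Φ).comp f) '' (f ⁻¹' V ∩ U)) ∈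
      𝓝 (1 : K) :=
    QuotientGroup.continuous_mk.continuousAt.preimage_mem_nhds himage
  filter_upwards [hsat, hV] with k ⟨u, ⟨huV, huU⟩, hu⟩ hk
  exact ⟨u, huU, hVΦ _ huV _ hk (QuotientGroup.eq.mp hu)⟩

lemma isClosed_range_prodMk_of_isProperMap {X Y Z : Type*} [TopologicalSpace X]
    [TopologicalSpace Y] [TopologicalSpace Z] [T2Space Z] {ψ : X → Y} {g : X → Z}
    (hψ : IsProperMap ψ) (hg : Continuous g) : IsClosed (range fun x => (ψ x, g x)) := by
  have hgraph : range (fun x => (ψ x, g x)) = Prod.map ψ id '' {p : X × Z | g p.1 = p.2} := by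
    ext ⟨y, z⟩
    simp [eq_comm]
  rw [hgraph]
  exact hψ.universally_closed Z _ (isClosed_eq (hg.comp continuous_fst) continuous_snd)

lemma MonoidHom.commute_of_ker_le {H A Q : Type*} [Group H] [CommGroup A] [Group Q]
    (ψ : H →* A) {g : H →* Q} (hg : Function.Surjective g) (hker : ψ.ker ≤ g.ker) (x y : Q) :
    Commute x y := by
  obtain ⟨a, rfl⟩ := hg x
  obtain ⟨b, rfl⟩ := hg y
  have hcomm : a * b * (b * a)⁻¹ ∈ g.ker := hker <| by
    simp [MonoidHom.mem_ker, mul_comm (ψ a) (ψ b)]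
  rw [MonoidHom.mem_ker, map_mul, map_inv, mul_inv_eq_one, map_mul, map_mul] at hcomm
  exact hcomm

lemma IsTotallyMinimalGroup.isOpen_image_preimage {A : Type u} [CommGroup A]
    [TopologicalSpace A] [IsTopologicalGroup A] (hA : IsTotallyMinimalGroup A) {H : Type*}
    [Group H] {Q : Type u} [Group Q] [TopologicalSpace Q] [IsTopologicalGroup Q]
    (ψ : H →* A) {g : H →* Q} (hg : Function.Surjective g) (hker : ψ.ker ≤ g.ker)
    (hΔ : IsClosed ((ψ.prod g).range : Set (A × Q))) {O : Set A} (hO : IsOpen O) :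
    IsOpen (g '' (ψ ⁻¹' O)) := by
  have hQ := ψ.commute_of_ker_le hg hker
  set Δ := (ψ.prod g).range
  have : Δ.Normal := ⟨fun n hn x => by
    rwa [show x * n = n * x from Prod.ext (mul_comm _ _) (hQ x.2 n.2).eq, mul_inv_cancel_right]⟩
  have : IsClosed (Δ : Set (A × Q)) := hΔ
  let ι : A →* (A × Q) ⧸ Δ := (QuotientGroup.mk' Δ).comp (MonoidHom.inl A Q)
  have hι : Continuous ι := QuotientGroup.continuous_mk.comp (continuous_id.prodMk continuous_const)
  have hιs : Function.Surjective ι := by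
    rintro ⟨a, y⟩
    obtain ⟨h, rfl⟩ := hg y
    refine ⟨a * (ψ h)⁻¹, QuotientGroup.eq.mpr ⟨h, ?_⟩⟩
    simp
  have hιO : IsOpen (ι '' O⁻¹) := hA _ ι hι hιs _ hO.inv
  -- `ι a = mk (1, y)` iff `(a⁻¹, y) = (ψ h, g h)` for some `h`
  have hpre : g '' (ψ ⁻¹' O) =
      (fun y => (QuotientGroup.mk ((1 : A), y) : (A × Q) ⧸ Δ)) ⁻¹' (ι '' O⁻¹) := by
    ext y
    simp only [mem_image, mem_preimage, Set.mem_inv]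
    constructor
    · rintro ⟨h, hO, rfl⟩
      exact ⟨(ψ h)⁻¹, by simpa using hO, QuotientGroup.eq.mpr ⟨h, by simp⟩⟩
    · rintro ⟨a, ha, hιa⟩
      obtain ⟨h, hh⟩ := QuotientGroup.eq.mp hιa
      simp only [MonoidHom.prod_apply, Prod.ext_iff, MonoidHom.inl_apply, Prod.fst_mul,
        Prod.snd_mul, Prod.fst_inv, Prod.snd_inv, mul_one, inv_one, one_mul] at hh
      exact ⟨h, hh.1 ▸ ha, hh.2⟩
  rw [hpre]
  exact hιO.preimage (QuotientGroup.continuous_mk.comp (continuous_const.prodMk continuous_id))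

lemma MonoidHom.isOpenMap_of_isOpen_image_preimage {H A Q : Type*} [Group H] [TopologicalSpace H]
    [IsTopologicalGroup H] [Group A] [TopologicalSpace A] [Group Q] [TopologicalSpace Q]
    {ψ : H →* A} (hψ : IsClosedMap ψ) {g : H →* Q} (hker : ψ.ker ≤ g.ker)
    (hopen : ∀ O : Set A, IsOpen O → IsOpen (g '' (ψ ⁻¹' O))) : IsOpenMap g := by
  intro U hU
  have hU_sub : U ⊆ ψ ⁻¹' kernImage ψ (U * ψ.ker) := fun u hu x hx =>
    ⟨u, hu, u⁻¹ * x, by simp [MonoidHom.mem_ker, hx], mul_inv_cancel_left u x⟩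
  have hsat : g '' (U * ψ.ker) ⊆ g '' U := by
    rintro _ ⟨_, ⟨u, hu, k, hk, rfl⟩, rfl⟩
    exact ⟨u, hu, by rw [map_mul, hker hk, mul_one]⟩
  have himage : g '' (ψ ⁻¹' kernImage ψ (U * ψ.ker)) = g '' U :=
    Subset.antisymm ((image_mono (Set.preimage_kernImage.l_u_le _)).trans hsat)
      (image_mono hU_sub)
  rw [← himage]
  exact hopen _ (isClosedMap_iff_kernImage.mp hψ hU.mul_right)

lemma Subgroup.finite_ker_fst_comp_subtype {A F : Type*} [Group A] [Group F] [Finite F]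
    (H : Subgroup (A × F)) : Finite ((MonoidHom.fst A F).comp H.subtype).ker :=
  Finite.of_injective (fun x => (x : H).1.2) <| by
    rintro ⟨⟨⟨a, φ⟩, ha⟩, ha1 : a = 1⟩ ⟨⟨⟨b, φ'⟩, hb⟩, hb1 : b = 1⟩ (rfl : φ = φ')
    subst ha1 hb1
    rfl

theorem prod_totallyMinimal_abelian_finite_cTotallyMinimal_general {A : Type u} [CommGroup A]
    [TopologicalSpace A] [IsTopologicalGroup A] {F : Type u} [Group F] [Finite F]
    [TopologicalSpace F] [DiscreteTopology F] (hA : IsTotallyMinimalGroup A) :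
    IsCTotallyMinimalGroup (A × F) := by
  intro H hH K _ _ _ _ f hf hf_surj
  let ψ : H →* A := (MonoidHom.fst A F).comp H.subtype
  have hψ : IsProperMap ψ :=
    isProperMap_fst_of_compactSpace.comp hH.isClosedEmbedding_subtypeVal.isProperMap
  have := H.finite_ker_fst_comp_subtype
  let Φ : Subgroup K := ψ.ker.map f
  have : Φ.Normal := ψ.normal_ker.map f hf_surj
  have hΦ : (Φ : Set K).Finite := (Set.toFinite (ψ.ker : Set H)).image f
  have : IsClosed (Φ : Set K) := hΦ.isClosed
  let g : H →* K ⧸ Φ := (QuotientGroup.mk' Φ).comp f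
  have hg_surj : Function.Surjective g := (QuotientGroup.mk'_surjective Φ).comp hf_surj
  have hker : ψ.ker ≤ g.ker := fun h hh =>
    (QuotientGroup.eq_one_iff _).mpr (Subgroup.mem_map_of_mem f hh)
  have hΔ : IsClosed ((ψ.prod g).range : Set (A × K ⧸ Φ)) := by
    rw [MonoidHom.coe_range]
    exact isClosed_range_prodMk_of_isProperMap (g := g) hψ (QuotientGroup.continuous_mk.comp hf)
  exact f.isOpenMap_of_isOpenMap_mk'_comp hf hΦ <|
    MonoidHom.isOpenMap_of_isOpen_image_preimage hψ.isClosedMap hker fun _ hO =>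
      hA.isOpen_image_preimage ψ hg_surj hker hΔ hO

/-- If `A` is a totally minimal abelian topological group and `F` a finite
discrete group, then `A × F` is c-totally minimal. -/
theorem prod_totallyMinimal_abelian_finite_cTotallyMinimal {A : Type u} [CommGroup A]
    [TopologicalSpace A] [IsTopologicalGroup A] [T2Space A] {F : Type u} [Group F] [Finite F]
    [TopologicalSpace F] [DiscreteTopology F] (hA : IsTotallyMinimalGroup A) :
    IsCTotallyMinimalGroup (A × F) :=
  prod_totallyMinimal_abelian_finite_cTotallyMinimal_general hA
end

section
/- Let G be a topological group and N a compact open normal subgroup of G such that the quotient group G/N is hereditarily minimal (i.e., every subgroup of G/N, with its induced topology, is minimal). Then G is c-minimal. -/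
open Filter Topology
open scoped Manifold

universe u

/-- A topological group is *hereditarily minimal* if every subgroup (with the subspace
topology) is minimal. -/
def HereditarilyMinimal (G : Type u) [Group G] [TopologicalSpace G] : Prop :=
  ∀ H : Subgroup G, IsMinimalGroup H

/-!
Let `H ≤ G` be closed, with subspace topology `t`, and `t'` a coarser Hausdorff group topology
on `H`. The subgroup `K = N ∩ H` is compact, and `H / K` embeds into the discrete group `G / N`.
The quotient of `t'` by `K` is a Hausdorff group topology on `H / K`, so by minimality of the
discrete group `H / K` it is discrete, i.e. `K` is `t'`-open. On the compact set `K` the two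
topologies agree (compact onto Hausdorff), so `t` and `t'` have the same neighbourhoods of `1`.
-/

theorem IsCompact.of_le {X : Type*} {t t' : TopologicalSpace X} (h : t ≤ t') {s : Set X}
    (hs : @IsCompact X t s) : @IsCompact X t' s := by
  simpa using @IsCompact.image X X t t' s id hs (continuous_id_of_le h)

theorem TopologicalSpace.eq_of_le_of_compactSpace_of_t2Space {X : Type*}
    {t₁ t₂ : TopologicalSpace X} (h : t₁ ≤ t₂) [@CompactSpace X t₁] [@T2Space X t₂] :
    t₁ = t₂ := by
  refine le_antisymm h fun s hs => ?_
  have hcompl : @IsCompact X t₂ sᶜ :=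
    (@IsClosed.isCompact X t₁ _ _ (@IsOpen.isClosed_compl X t₁ s hs)).of_le h
  exact @isClosed_compl_iff X t₂ s |>.mp (@IsCompact.isClosed X t₂ _ _ hcompl)

theorem IsTopologicalGroup.eq_of_le_of_isCompact_of_isOpen {H : Type*} [Group H]
    {t t' : TopologicalSpace H} (hle : t ≤ t') (htg : @IsTopologicalGroup H t _)
    (htg' : @IsTopologicalGroup H t' _) [@T2Space H t'] {S : Set H} (hS : @IsCompact H t S)
    (hS' : IsOpen[t'] S) (h1S : (1 : H) ∈ S) : t' = t := by
  have hSubtype : @instTopologicalSpaceSubtype H (· ∈ S) t =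
      @instTopologicalSpaceSubtype H (· ∈ S) t' := by
    have : @CompactSpace S (@instTopologicalSpaceSubtype H (· ∈ S) t) :=
      @isCompact_iff_compactSpace H t S |>.mp hS
    exact TopologicalSpace.eq_of_le_of_compactSpace_of_t2Space (induced_mono hle)
  refine htg'.ext htg ?_
  calc @nhds H t' 1 = @nhdsWithin H t' 1 S := (@IsOpen.nhdsWithin_eq H t' 1 S hS' h1S).symm
    _ = @nhdsWithin H t 1 S := by
      rw [@nhdsWithin_eq_map_subtype_coe H t' S 1 h1S, @nhdsWithin_eq_map_subtype_coe H t S 1 h1S,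
        hSubtype]
    _ = @nhds H t 1 := @IsOpen.nhdsWithin_eq H t 1 S (hle S hS') h1S

theorem MonoidHom.isOpen_ker_of_isMinimalGroup_bot {H B : Type*} [Group H] [TopologicalSpace H]
    [IsTopologicalGroup H] [Group B] (f : H →* B) (hf : Function.Surjective f)
    (hker : IsClosed (f.ker : Set H)) (hmin : @IsMinimalGroup B _ ⊥) :
    IsOpen (f.ker : Set H) := by
  let e : H ⧸ f.ker ≃* B := QuotientGroup.quotientKerEquivOfSurjective f hf
  let tB : TopologicalSpace B := .induced e.symm inferInstance
  have hemb : @IsEmbedding B (H ⧸ f.ker) tB _ e.symm := ⟨⟨rfl⟩, e.symm.injective⟩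
  have : @DiscreteTopology B tB :=
    ⟨hmin tB bot_le (topologicalGroup_induced e.symm) hemb.t2Space⟩
  have he : @Continuous _ _ _ tB e :=
    continuous_induced_rng.mpr (continuous_id.congr fun x => (e.symm_apply_apply x).symm)
  rw [← QuotientGroup.discreteTopology_iff]
  exact DiscreteTopology.of_continuous_injective he e.injective

theorem IsMinimalGroup.of_surjective_of_isCompact_ker {H B : Type*} [Group H]
    [TopologicalSpace H] [IsTopologicalGroup H] [Group B] (f : H →* B)
    (hf : Function.Surjective f) (hK : IsCompact (f.ker : Set H))
    (hmin : @IsMinimalGroup B _ ⊥) : IsMinimalGroup H := by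
  intro t' hle htg' ht2
  have hK' : @IsCompact H t' f.ker := hK.of_le hle
  have hKopen : IsOpen[t'] (f.ker : Set H) :=
    @MonoidHom.isOpen_ker_of_isMinimalGroup_bot _ _ _ t' htg' _ f hf
      (@IsCompact.isClosed H t' ht2 _ hK') hmin
  exact IsTopologicalGroup.eq_of_le_of_isCompact_of_isOpen hle inferInstance htg' hK hKopen
    f.ker.one_mem

theorem cminimal_of_compact_open_normal_hereditarilyMinimal_quotient_general {G : Type u} [Group G]
    [TopologicalSpace G] [IsTopologicalGroup G] (N : Subgroup G) [N.Normal]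
    (hNcomp : IsCompact (N : Set G)) (hNopen : IsOpen (N : Set G))
    (hq : HereditarilyMinimal (G ⧸ N)) : IsCMinimalGroup G := by
  intro H hH
  let f : H →* G ⧸ N := (QuotientGroup.mk' N).comp H.subtype
  refine .of_surjective_of_isCompact_ker f.rangeRestrict f.rangeRestrict_surjective ?_ ?_
  · have hker : f.rangeRestrict.ker = N.subgroupOf H := by
      rw [MonoidHom.ker_rangeRestrict, ← MonoidHom.comap_ker, QuotientGroup.ker_mk']
      rfl
    rw [hker, IsEmbedding.subtypeVal.isCompact_iff]
    convert hNcomp.inter_left hH using 1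
    exact Subtype.image_preimage_coe _ _
  · have : DiscreteTopology (G ⧸ N) := QuotientGroup.discreteTopology hNopen
    rw [← DiscreteTopology.eq_bot (α := f.range)]
    exact hq f.range

/-- If `G` has a compact open normal subgroup `N` with `G/N` hereditarily
minimal, then `G` is c-minimal. -/
theorem cminimal_of_compact_open_normal_hereditarilyMinimal_quotient {G : Type u} [Group G]
    [TopologicalSpace G] [IsTopologicalGroup G] [T2Space G] (N : Subgroup G) [N.Normal]
    (hNcomp : IsCompact (N : Set G)) (hNopen : IsOpen (N : Set G))
    (hq : HereditarilyMinimal (G ⧸ N)) : IsCMinimalGroup G :=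
  cminimal_of_compact_open_normal_hereditarilyMinimal_quotient_general N hNcomp hNopen hq
end

section
/- Let G be a topological group and N a compact open normal subgroup of G such that the quotient group G/N is hereditarily totally minimal (i.e., every subgroup of G/N, with its induced topology, is totally minimal). Then G is c-totally minimal. -/
/-!
For a closed subgroup `H`, the kernel `C = H ∩ N` of `H → G ⧸ N` is compact, and `H ⧸ C` is
isomorphic to a subgroup of the discrete group `G ⧸ N`, hence totally minimal. For a continuous
surjection `f : H → K` onto a Hausdorff group, `f(C)` is compact, hence closed, and `K ⧸ f(C)`
is a Hausdorff image of the discrete totally minimal group `H ⧸ C`; so it is discrete and `f(C)`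
is open. Finally, a homomorphism mapping a compact set `C` onto a neighbourhood of `1` is open:
for an open `V ∋ 1`, `f(V)` contains `f(C)` minus the compact set `f(C \ V·ker f)`, which
misses `1`.
-/

open Filter Topology
open scoped Manifold
open scoped Pointwise

universe u

/-- A topological group is *hereditarily totally minimal* if every subgroup (with the
subspace topology) is totally minimal. -/
def HereditarilyTotallyMinimal (G : Type u) [Group G] [TopologicalSpace G] : Prop :=
  ∀ H : Subgroup G, IsTotallyMinimalGroup H

theorem MonoidHom.isOpenMap_of_isCompact_of_image_mem_nhds_one
    {H K : Type*} [Group H] [TopologicalSpace H] [IsTopologicalGroup H]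
    [Group K] [TopologicalSpace K] [ContinuousMul K] [T2Space K]
    (f : H →* K) (hf : Continuous f) {C : Set H} (hC : IsCompact C) (hfC : f '' C ∈ 𝓝 1) :
    IsOpenMap f := by
  refine IsTopologicalGroup.isOpenMap_iff_nhds_one.mpr fun W hW => ?_
  obtain ⟨V, hVW, hV, h1V⟩ := mem_nhds_iff.mp (Filter.mem_map.mp hW)
  set F : Set H := C ∩ (V * (f.ker : Set H))ᶜ
  have hfF : IsClosed (f '' F) :=
    ((hC.inter_right hV.mul_right.isClosed_compl).image hf).isClosed
  have h1F : (1 : K) ∉ f '' F := by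
    rintro ⟨c, ⟨-, hc⟩, hc1⟩
    exact hc ⟨1, h1V, c, hc1, one_mul c⟩
  have hsub : f '' C \ f '' F ⊆ f '' V := by
    rintro _ ⟨⟨c, hcC, rfl⟩, hcF⟩
    have hcV : c ∈ V * (f.ker : Set H) := by
      by_contra h
      exact hcF ⟨c, ⟨hcC, h⟩, rfl⟩
    obtain ⟨v, hv, k, hk, rfl⟩ := hcV
    exact ⟨v, hv, by rw [map_mul, MonoidHom.mem_ker.mp hk, mul_one]⟩
  exact Filter.mem_of_superset (sdiff_mem hfC (hfF.compl_mem_nhds h1F))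
    ((hsub.trans (Set.image_mono hVW)).trans (Set.image_preimage_subset f W))

theorem isOpen_image_ker_of_isTotallyMinimalGroup
    {H Q K : Type u} [Group H] [TopologicalSpace H] [Group Q] [TopologicalSpace Q]
    [DiscreteTopology Q] [Group K] [TopologicalSpace K] [IsTopologicalGroup K] [T2Space K]
    (ψ : H →* Q) (hψ : Function.Surjective ψ) (hQ : IsTotallyMinimalGroup Q)
    (hker : IsCompact (ψ.ker : Set H)) (f : H →* K) (hf : Continuous f)
    (hfs : Function.Surjective f) : IsOpen (f '' ψ.ker) := by
  set M : Subgroup K := ψ.ker.map f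
  have hM : (M : Set K) = f '' ψ.ker := Subgroup.coe_map f ψ.ker
  have : M.Normal := Subgroup.Normal.map inferInstance f hfs
  have : IsClosed (M : Set K) := hM ▸ (hker.image hf).isClosed
  let φ : Q →* K ⧸ M := ψ.liftOfSurjective hψ
    ⟨(QuotientGroup.mk' M).comp f, fun x hx =>
      (QuotientGroup.eq_one_iff (f x)).mpr (Subgroup.mem_map_of_mem f hx)⟩
  have hφ : Function.Surjective φ := by
    intro y
    obtain ⟨k, rfl⟩ := QuotientGroup.mk'_surjective M y
    obtain ⟨x, rfl⟩ := hfs k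
    exact ⟨ψ x, ψ.liftOfRightInverse_comp_apply _ _ _ x⟩
  have h1 : IsOpen ({1} : Set (K ⧸ M)) := by
    simpa using hQ (K ⧸ M) φ continuous_of_discreteTopology hφ {1} (isOpen_discrete _)
  have : DiscreteTopology (K ⧸ M) := discreteTopology_of_isOpen_singleton_one h1
  exact hM ▸ QuotientGroup.discreteTopology_iff.mp inferInstance

theorem IsTotallyMinimalGroup.of_surjective_of_isCompact_ker
    {H Q : Type u} [Group H] [TopologicalSpace H] [IsTopologicalGroup H]
    [Group Q] [TopologicalSpace Q] [DiscreteTopology Q]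
    (ψ : H →* Q) (hψ : Function.Surjective ψ) (hQ : IsTotallyMinimalGroup Q)
    (hker : IsCompact (ψ.ker : Set H)) : IsTotallyMinimalGroup H := by
  intro K _ _ _ _ f hf hfs
  have hopen := isOpen_image_ker_of_isTotallyMinimalGroup ψ hψ hQ hker f hf hfs
  exact f.isOpenMap_of_isCompact_of_image_mem_nhds_one hf hker
    (hopen.mem_nhds ⟨1, ψ.ker.one_mem, map_one f⟩)

theorem cTotallyMinimal_of_compact_open_normal_hereditarilyTotallyMinimal_quotient_general
    {G : Type u} [Group G] [TopologicalSpace G] [IsTopologicalGroup G]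
    (N : Subgroup G) [N.Normal] (hNcomp : IsCompact (N : Set G))
    (hNopen : IsOpen (N : Set G)) (hq : HereditarilyTotallyMinimal (G ⧸ N)) :
    IsCTotallyMinimalGroup G := by
  intro H hH
  have : DiscreteTopology (G ⧸ N) := QuotientGroup.discreteTopology hNopen
  let ρ : H →* G ⧸ N := (QuotientGroup.mk' N).comp H.subtype
  have hker : (ρ.rangeRestrict.ker : Set H) = Subtype.val ⁻¹' (N : Set G) := by
    ext x
    simp [ρ, MonoidHom.ker_rangeRestrict, QuotientGroup.eq_one_iff]
  refine IsTotallyMinimalGroup.of_surjective_of_isCompact_ker ρ.rangeRestrict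
    ρ.rangeRestrict_surjective (hq ρ.range) ?_
  have hval : IsClosedEmbedding ((↑) : H → G) := .subtypeVal hH
  exact hker ▸ hval.isCompact_preimage hNcomp

/-- If `G` has a compact open normal subgroup `N` with `G/N` hereditarily
totally minimal, then `G` is c-totally minimal. -/
theorem cTotallyMinimal_of_compact_open_normal_hereditarilyTotallyMinimal_quotient
    {G : Type u} [Group G] [TopologicalSpace G] [IsTopologicalGroup G] [T2Space G]
    (N : Subgroup G) [N.Normal] (hNcomp : IsCompact (N : Set G))
    (hNopen : IsOpen (N : Set G)) (hq : HereditarilyTotallyMinimal (G ⧸ N)) :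
    IsCTotallyMinimalGroup G :=
  cTotallyMinimal_of_compact_open_normal_hereditarilyTotallyMinimal_quotient_general N hNcomp hNopen
    hq
end

section
/- If G is a c-totally minimal topological group and N is a closed normal subgroup of G, then the quotient group G/N (with the quotient topology) is c-totally minimal. -/
open Filter Topology
open scoped Manifold

universe u

/-!
A closed subgroup `H'` of a continuous surjective image `π(G)` is the continuous surjective
image of the closed subgroup `π⁻¹(H')` of `G`.  Total minimality passes to such images: for
`f : H' →* K` continuous and surjective, `f ∘ π` is open, hence so is `f`, since `π` is
continuous and surjective.
-/

section

variable {G Q : Type u} [Group G] [TopologicalSpace G] [Group Q] [TopologicalSpace Q]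

theorem IsTotallyMinimalGroup.of_surjective (hG : IsTotallyMinimalGroup G) (π : G →* Q)
    (hπ : Continuous π) (hπs : Function.Surjective π) : IsTotallyMinimalGroup Q := by
  intro K _ _ _ _ f hf hfs
  exact IsOpenMap.of_comp hπ hπs (hG K (f.comp π) (hf.comp hπ) (hfs.comp hπs))

theorem IsCTotallyMinimalGroup.of_surjective (hG : IsCTotallyMinimalGroup G) (π : G →* Q)
    (hπ : Continuous π) (hπs : Function.Surjective π) : IsCTotallyMinimalGroup Q := by
  intro H' hH'
  exact (hG _ (hH'.preimage hπ)).of_surjective (π.subgroupComap H')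
    ((hπ.comp continuous_subtype_val).subtype_mk _)
    (π.subgroupComap_surjective_of_surjective H' hπs)

end

theorem quotient_cTotallyMinimal_general {G : Type u} [Group G] [TopologicalSpace G]
    (hctm : IsCTotallyMinimalGroup G) (N : Subgroup G)
    [N.Normal] : IsCTotallyMinimalGroup (G ⧸ N) :=
  hctm.of_surjective (QuotientGroup.mk' N) continuous_quot_mk (QuotientGroup.mk'_surjective N)

/-- Quotients of c-totally minimal groups by closed normal subgroups are
c-totally minimal. -/
theorem quotient_cTotallyMinimal {G : Type u} [Group G] [TopologicalSpace G]
    [IsTopologicalGroup G] [T2Space G] (hctm : IsCTotallyMinimalGroup G) (N : Subgroup G)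
    [N.Normal] (hN : IsClosed (N : Set G)) : IsCTotallyMinimalGroup (G ⧸ N) :=
  quotient_cTotallyMinimal_general hctm N
end

section
/- Let N be a compact open normal subgroup of a topological group G. Then G is c-totally minimal if and only if the quotient group G/N is hereditarily totally minimal (i.e., every subgroup of the discrete group G/N is totally minimal). -/
open Filter Topology
open scoped Manifold

/-!
Modulo the compact open normal subgroup `N`, total minimality of a subgroup `H ≤ G` is decided by
its discrete image in `G ⧸ N`. Total minimality passes to continuous surjective images, which
gives one direction since preimages of subgroups of `G ⧸ N` are open, hence closed. Conversely,
let `f` be a continuous surjection from a closed `H` onto a Hausdorff group `K`, and let `U` be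
the compact open subgroup `H ∩ N`. Total minimality of `H ⧸ U` forces `K ⧸ f(U)` to be
discrete, i.e. `f(U)` is open in `K`, and `f : U → f(U)` is open since `U` is compact; as `U` is
a neighbourhood of `1`, `f` is open.
-/

namespace MonoidHom

theorem isOpenMap_of_compactSpace {C K : Type*} [Group C] [TopologicalSpace C] [ContinuousMul C]
    [CompactSpace C] [Group K] [TopologicalSpace K] [T2Space K] (f : C →* K)
    (hfc : Continuous f) (hfs : Function.Surjective f) : IsOpenMap f :=
  (isOpenQuotientMap_of_isQuotientMap (.of_surjective_continuous hfs hfc)).isOpenMap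

theorem isOpenMap_of_isOpenMap_subgroupMap {G K : Type*} [Group G] [TopologicalSpace G]
    [IsTopologicalGroup G] [Group K] [TopologicalSpace K] [IsTopologicalGroup K] (f : G →* K)
    {U : Subgroup G} (hU : IsOpen (U : Set G)) (hfU : IsOpen (U.map f : Set K))
    (h : IsOpenMap (f.subgroupMap U)) : IsOpenMap f := by
  rw [IsTopologicalGroup.isOpenMap_iff_nhds_one] at h ⊢
  calc 𝓝 (1 : K) = map Subtype.val (𝓝 (1 : U.map f)) :=
        (hfU.isOpenEmbedding_subtypeVal.map_nhds_eq 1).symm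
    _ ≤ map Subtype.val (map (f.subgroupMap U) (𝓝 1)) := map_mono h
    _ = map f (map Subtype.val (𝓝 (1 : U))) := by rw [map_map, map_map]; rfl
    _ = map f (𝓝 1) := congrArg (map f) (hU.isOpenEmbedding_subtypeVal.map_nhds_eq 1)

end MonoidHom

namespace IsTotallyMinimalGroup

variable {G : Type u} [Group G] [TopologicalSpace G]

theorem of_surjective_s15 {G' : Type u} [Group G'] [TopologicalSpace G']
    (hG : IsTotallyMinimalGroup G) (φ : G →* G') (hφc : Continuous φ)
    (hφs : Function.Surjective φ) : IsTotallyMinimalGroup G' := by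
  intro K _ _ _ _ f hfc hfs V hV
  have hopen := hG K (f.comp φ) (hfc.comp hφc) (hfs.comp hφs) _ (hV.preimage hφc)
  rwa [MonoidHom.coe_comp, Set.image_comp, Set.image_preimage_eq V hφs] at hopen

variable [IsTopologicalGroup G] {U : Subgroup G} [U.Normal]

theorem isOpen_map_of_quotient (hUo : IsOpen (U : Set G)) (hUc : IsCompact (U : Set G))
    (hQ : IsTotallyMinimalGroup (G ⧸ U)) {K : Type u} [Group K] [TopologicalSpace K]
    [IsTopologicalGroup K] [T2Space K] (f : G →* K) (hfc : Continuous f)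
    (hfs : Function.Surjective f) : IsOpen (U.map f : Set K) := by
  have : (U.map f).Normal := .map inferInstance f hfs
  have : IsClosed (U.map f : Set K) := (hUc.image hfc).isClosed
  have : DiscreteTopology (G ⧸ U) := QuotientGroup.discreteTopology hUo
  have hopen := hQ _ (QuotientGroup.map U (U.map f) f (Subgroup.le_comap_map f U))
    continuous_of_discreteTopology
    (QuotientGroup.map_surjective_of_surjective U _ f (QuotientGroup.mk_surjective.comp hfs) _)
    {1} (isOpen_discrete _)
  rw [Set.image_singleton, map_one] at hopen
  exact QuotientGroup.discreteTopology_iff.mp (discreteTopology_of_isOpen_singleton_one hopen)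

theorem of_quotient (hUo : IsOpen (U : Set G)) (hUc : IsCompact (U : Set G))
    (hQ : IsTotallyMinimalGroup (G ⧸ U)) : IsTotallyMinimalGroup G := by
  intro K _ _ _ _ f hfc hfs
  have : CompactSpace U := isCompact_iff_compactSpace.mp hUc
  refine f.isOpenMap_of_isOpenMap_subgroupMap hUo (hQ.isOpen_map_of_quotient hUo hUc f hfc hfs) ?_
  exact (f.subgroupMap U).isOpenMap_of_compactSpace
    ((hfc.comp continuous_subtype_val).subtype_mk _) (f.subgroupMap_surjective U)

end IsTotallyMinimalGroup

namespace IsCTotallyMinimalGroup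

variable {G : Type u} [Group G] [TopologicalSpace G] [IsTopologicalGroup G]
  (N : Subgroup G) [N.Normal]

theorem hereditarilyTotallyMinimal_quotient (hNo : IsOpen (N : Set G))
    (hG : IsCTotallyMinimalGroup G) : HereditarilyTotallyMinimal (G ⧸ N) := by
  intro Q
  have hN : N ≤ Q.comap (QuotientGroup.mk' N) :=
    (QuotientGroup.ker_mk' N).ge.trans (MonoidHom.ker_le_comap _ Q)
  have hopen := Subgroup.isOpen_mono hN hNo
  exact (hG _ (Subgroup.isClosed_of_isOpen _ hopen)).of_surjective_s15
    ((QuotientGroup.mk' N).subgroupComap Q)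
    ((QuotientGroup.continuous_mk.comp continuous_subtype_val).subtype_mk _)
    ((QuotientGroup.mk' N).subgroupComap_surjective_of_surjective Q
      (QuotientGroup.mk'_surjective N))

theorem of_hereditarilyTotallyMinimal_quotient (hNo : IsOpen (N : Set G))
    (hNc : IsCompact (N : Set G)) (hQ : HereditarilyTotallyMinimal (G ⧸ N)) :
    IsCTotallyMinimalGroup G := by
  intro H hH
  have : DiscreteTopology (G ⧸ N) := QuotientGroup.discreteTopology hNo
  let φ : H →* G ⧸ N := (QuotientGroup.mk' N).comp H.subtype
  have hker : (φ.ker : Set H) = Subtype.val ⁻¹' N := by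
    ext; simp [φ, QuotientGroup.eq_one_iff]
  refine IsTotallyMinimalGroup.of_quotient (U := φ.ker) ?_ ?_ ((hQ φ.range).of_surjective_s15
    (QuotientGroup.quotientKerEquivRange φ).symm.toMonoidHom continuous_of_discreteTopology
    (MulEquiv.surjective _))
  · rw [hker]; exact hNo.preimage continuous_subtype_val
  · rw [hker]; exact hH.isClosedEmbedding_subtypeVal.isCompact_preimage hNc

end IsCTotallyMinimalGroup

theorem cTotallyMinimal_iff_quotient_hereditarilyTotallyMinimal_general {G : Type u} [Group G]
    [TopologicalSpace G] [IsTopologicalGroup G] (N : Subgroup G) [N.Normal]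
    (hNcomp : IsCompact (N : Set G)) (hNopen : IsOpen (N : Set G)) :
    IsCTotallyMinimalGroup G ↔ HereditarilyTotallyMinimal (G ⧸ N) :=
  ⟨IsCTotallyMinimalGroup.hereditarilyTotallyMinimal_quotient N hNopen,
    IsCTotallyMinimalGroup.of_hereditarilyTotallyMinimal_quotient N hNopen hNcomp⟩

/-- If `N` is a compact open normal subgroup of a topological group `G`,
then `G` is c-totally minimal iff `G/N` is hereditarily totally minimal. -/
theorem cTotallyMinimal_iff_quotient_hereditarilyTotallyMinimal {G : Type u} [Group G]
    [TopologicalSpace G] [IsTopologicalGroup G] [T2Space G] (N : Subgroup G) [N.Normal]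
    (hNcomp : IsCompact (N : Set G)) (hNopen : IsOpen (N : Set G)) :
    IsCTotallyMinimalGroup G ↔ HereditarilyTotallyMinimal (G ⧸ N) :=
  cTotallyMinimal_iff_quotient_hereditarilyTotallyMinimal_general N hNcomp hNopen
end

section
/- Let G be a strongly compactly covered topological group, i.e., every element of G is contained in a compact open normal subgroup of G. If G is c-totally minimal, then G is compact. -/
open Filter Topology
open scoped Manifold

universe u

open scoped Pointwise

section TotallyMinimal

variable {T G : Type u} [Group T] [TopologicalSpace T] [Group G] [TopologicalSpace G]

theorem IsTotallyMinimalGroup.of_surjective_s16 (hT : IsTotallyMinimalGroup T) {e : T →* G}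
    (he : Continuous e) (he' : Function.Surjective e) : IsTotallyMinimalGroup G := by
  intro H _ _ _ _ f hf hf' U hU
  rw [← Set.image_preimage_eq U he', ← Set.image_comp]
  exact hT H (f.comp e) (hf.comp he) (hf'.comp he') _ (hU.preimage he)

theorem IsCTotallyMinimalGroup.isTotallyMinimalGroup (hG : IsCTotallyMinimalGroup G) :
    IsTotallyMinimalGroup G :=
  (hG ⊤ isClosed_univ).of_surjective_s16 (e := (⊤ : Subgroup G).subtype) continuous_subtype_val
    fun g => ⟨⟨g, trivial⟩, rfl⟩

theorem IsCTotallyMinimalGroup.quotient (hG : IsCTotallyMinimalGroup G) (K : Subgroup G)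
    [K.Normal] : IsCTotallyMinimalGroup (G ⧸ K) := fun H hH =>
  (hG (H.comap (QuotientGroup.mk' K)) (hH.preimage continuous_quot_mk)).of_surjective_s16
    (e := (QuotientGroup.mk' K).subgroupComap H)
    ((continuous_quot_mk.comp continuous_subtype_val).subtype_mk _)
    ((QuotientGroup.mk' K).subgroupComap_surjective_of_surjective H
      (QuotientGroup.mk'_surjective K))

variable [DiscreteTopology T] [IsTopologicalGroup G] [T2Space G] [CompactSpace G]

theorem IsTotallyMinimalGroup.finite_of_injective (hT : IsTotallyMinimalGroup T) {ψ : T →* G}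
    (hψ : Function.Injective ψ) : Finite T := by
  have hopen : IsOpenMap ψ.rangeRestrict :=
    hT ψ.range ψ.rangeRestrict continuous_of_discreteTopology ψ.rangeRestrict_surjective
  have : DiscreteTopology ψ.range := by
    refine discreteTopology_iff_isOpen_singleton.mpr fun y => ?_
    obtain ⟨t, rfl⟩ := ψ.rangeRestrict_surjective y
    simpa using hopen {t} (isOpen_discrete _)
  have : CompactSpace ψ.range :=
    isCompact_iff_compactSpace.mp (Subgroup.isClosed_of_discrete (H := ψ.range)).isCompact
  have : Finite ψ.range := finite_of_compact_of_discrete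
  exact Finite.of_injective _ (MonoidHom.rangeRestrict_injective_iff.mpr hψ)

theorem IsTotallyMinimalGroup.finiteIndex_ker (hT : IsTotallyMinimalGroup T) (ψ : T →* G) :
    ψ.ker.FiniteIndex := by
  have : DiscreteTopology (T ⧸ ψ.ker) := QuotientGroup.discreteTopology (isOpen_discrete _)
  have := (hT.of_surjective_s16 continuous_quot_mk (QuotientGroup.mk'_surjective ψ.ker)
    ).finite_of_injective (QuotientGroup.kerLift_injective ψ)
  exact Subgroup.finiteIndex_of_finite_quotient

end TotallyMinimal

theorem compactSpace_of_isCompact_of_finiteIndex {G : Type*} [Group G] [TopologicalSpace G]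
    [ContinuousMul G] {K : Subgroup G} [K.FiniteIndex] (hK : IsCompact (K : Set G)) :
    CompactSpace G := by
  refine ⟨?_⟩
  have : Set.range (fun q : G ⧸ K => q.out) * (K : Set G) = Set.univ := by
    refine Set.eq_univ_of_forall fun g => ?_
    obtain ⟨k, hk⟩ := QuotientGroup.mk_out_eq_mul K g
    exact ⟨_, ⟨(g : G ⧸ K), rfl⟩, _, K.inv_mem k.2, by simp only [hk, mul_inv_cancel_right]⟩
  rw [← this]
  exact (Set.finite_range _).isCompact.mul hK

theorem exists_monoidHom_circle_apply_ne_one {M : Type*} [CommGroup M] {x : M} (hx : x ≠ 1) :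
    ∃ χ : M →* Circle, χ x ≠ 1 := by
  -- characters with values in `ℚ/ℤ` separate points, and `ℚ/ℤ` embeds in `ℝ/ℤ ≅ Circle`
  obtain ⟨c, hc⟩ :=
    CharacterModule.exists_character_apply_ne_zero_of_ne_zero (a := Additive.ofMul x) hx
  let j : AddCircle (1 : ℚ) →+ AddCircle (1 : ℝ) :=
    QuotientAddGroup.map _ _ (Rat.castHom ℝ).toAddMonoidHom fun q hq => by
      obtain ⟨n, rfl⟩ := AddSubgroup.mem_zmultiples_iff.mp hq
      exact AddSubgroup.mem_zmultiples_iff.mpr ⟨n, by simp⟩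
  have hj : Function.Injective j := by
    refine (injective_iff_map_eq_zero j).mpr fun y hy => ?_
    obtain ⟨q, rfl⟩ := QuotientAddGroup.mk_surjective y
    obtain ⟨n, hn⟩ := (AddCircle.coe_eq_zero_iff (p := (1 : ℝ))).mp hy
    have hq : ((n : ℚ) : ℝ) = q := by simpa using hn
    exact (AddCircle.coe_eq_zero_iff (p := (1 : ℚ))).mpr ⟨n, by simpa using Rat.cast_injective hq⟩
  refine ⟨MonoidHom.mk' (fun y => AddCircle.toCircle (j (c (Additive.ofMul y))))
    fun a b => by simp only [ofMul_mul, map_add, AddCircle.toCircle_add], fun h => hc ?_⟩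
  apply hj
  apply AddCircle.injective_toCircle one_ne_zero
  simpa using h

theorem IsTotallyMinimalGroup.finite_of_commGroup {M : Type u} [CommGroup M]
    [TopologicalSpace M] [DiscreteTopology M] (hM : IsTotallyMinimalGroup M) : Finite M :=
  hM.finite_of_injective (ψ := MonoidHom.pi fun χ : M →* Circle => χ) <|
    (injective_iff_map_eq_one _).mpr fun x hx => by
      by_contra hne
      obtain ⟨χ, hχ⟩ := exists_monoidHom_circle_apply_ne_one hne
      exact hχ (by simpa using congrFun hx χ)

theorem IsTotallyMinimalGroup.finiteIndex_center {Q : Type u} [Group Q] [TopologicalSpace Q]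
    [DiscreteTopology Q] (hQ : IsTotallyMinimalGroup Q)
    (hN : ∀ q : Q, ∃ N : Subgroup Q, N.Normal ∧ Finite N ∧ q ∈ N) :
    (Subgroup.center Q).FiniteIndex := by
  choose N hNormal hFinite hmem using hN
  let C : Q → Subgroup Q := fun q => (MulAut.conjNormal (H := N q)).ker
  have : ∀ q, DiscreteTopology (Q ⧸ C q) := fun q =>
    QuotientGroup.discreteTopology (isOpen_discrete _)
  have := hQ.finiteIndex_ker (MonoidHom.pi fun q => QuotientGroup.mk' (C q))
  refine Subgroup.finiteIndex_of_le (H := (MonoidHom.pi fun q => QuotientGroup.mk' (C q)).ker)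
    fun t ht => Subgroup.mem_center_iff.mpr fun q => ?_
  have hconj : MulAut.conjNormal (H := N q) t = 1 := by
    simpa [C] using congrFun ht q
  have hfix := congrArg Subtype.val (DFunLike.congr_fun hconj ⟨q, hmem q⟩)
  simp only [MulAut.conjNormal_apply, MulAut.one_apply] at hfix
  exact (mul_inv_eq_iff_eq_mul.mp hfix).symm

theorem stronglyCompactlyCovered_cTotallyMinimal_compact_general {G : Type u} [Group G]
    [TopologicalSpace G] [IsTopologicalGroup G]
    (hscc : ∀ g : G, ∃ N : Subgroup G, N.Normal ∧ IsCompact (N : Set G) ∧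
      IsOpen (N : Set G) ∧ g ∈ N)
    (hctm : IsCTotallyMinimalGroup G) : CompactSpace G := by
  obtain ⟨K, hKnormal, hKcompact, hKopen, -⟩ := hscc 1
  have : DiscreteTopology (G ⧸ K) := QuotientGroup.discreteTopology hKopen
  have hQ : IsCTotallyMinimalGroup (G ⧸ K) := hctm.quotient K
  have hlocal : ∀ q : G ⧸ K, ∃ N : Subgroup (G ⧸ K), N.Normal ∧ Finite N ∧ q ∈ N := by
    intro q
    obtain ⟨g, rfl⟩ := QuotientGroup.mk_surjective q
    obtain ⟨N, hNnormal, hNcompact, -, hg⟩ := hscc g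
    refine ⟨N.map (QuotientGroup.mk' K), hNnormal.map _ (QuotientGroup.mk'_surjective K),
      ?_, ⟨g, hg, rfl⟩⟩
    exact (hNcompact.image QuotientGroup.continuous_mk).finite_of_discrete.to_subtype
  have hcenter_index := hQ.isTotallyMinimalGroup.finiteIndex_center hlocal
  -- the center is commutative only through the unbundled `IsMulCommutative` instance
  have hcenter_finite := open scoped IsMulCommutative in
    IsTotallyMinimalGroup.finite_of_commGroup (M := Subgroup.center (G ⧸ K))
      (hQ _ (isClosed_discrete _))
  have : Finite (G ⧸ K) :=
    ((Subgroup.center _).finite_iff_finite_and_finiteIndex).mpr ⟨hcenter_finite, hcenter_index⟩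
  have : K.FiniteIndex := Subgroup.finiteIndex_of_finite_quotient
  exact compactSpace_of_isCompact_of_finiteIndex hKcompact

/-- A strongly compactly covered c-totally minimal group is compact. -/
theorem stronglyCompactlyCovered_cTotallyMinimal_compact {G : Type u} [Group G]
    [TopologicalSpace G] [IsTopologicalGroup G] [T2Space G]
    (hscc : ∀ g : G, ∃ N : Subgroup G, N.Normal ∧ IsCompact (N : Set G) ∧
      IsOpen (N : Set G) ∧ g ∈ N)
    (hctm : IsCTotallyMinimalGroup G) : CompactSpace G :=
  stronglyCompactlyCovered_cTotallyMinimal_compact_general hscc hctm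
end

section
/- Let G be a compactly covered, locally compact, locally solvable, balanced topological group. Then every compact subset of G is contained in a compact open subgroup of G. -/
open Filter Topology
open scoped Manifold

universe u

/-- A topological group is *compactly covered* if every element lies in a compact
subgroup. -/
def CompactlyCovered (G : Type u) [Group G] [TopologicalSpace G] : Prop :=
  ∀ g : G, ∃ H : Subgroup G, IsCompact (H : Set G) ∧ g ∈ H

/-- A group is *locally solvable* if every finitely generated subgroup is solvable. -/
def LocallySolvable (G : Type u) [Group G] : Prop :=
  ∀ s : Finset G, IsSolvable ↥(Subgroup.closure (s : Set G))

/-- A topological group is *balanced* if it has a neighborhood base at the identity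
consisting of sets invariant under all conjugations. -/
def IsBalancedGroup (G : Type u) [Group G] [TopologicalSpace G] : Prop :=
  ∀ U ∈ nhds (1 : G), ∃ V ∈ nhds (1 : G), V ⊆ U ∧ ∀ g : G, ∀ x ∈ V, g * x * g⁻¹ ∈ V


/-!
Let `V` be a compact, symmetric, conjugation-invariant neighbourhood of `1`. If such a group is
compactly generated and each of its finitely generated subgroups lies in a compact subgroup, then
it is compact: `W = ⟨V⟩` is an open normal subgroup, compact because `V * V ⊆ F * V` for a finite
`F`, and `G ⧸ W` is finitely generated, solvable and torsion (a compact subgroup meets only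
finitely many cosets of `W`), hence finite. All hypotheses pass to closed subgroups.

Finitely generated subgroups `H` have compact closure, by induction on the derived length: modulo
`cl ⁅H, H⁆` the compact subgroups containing the generators commute, so `cl H = K * cl ⁅H, H⁆`
with `K` compact. Then `cl ⁅H, H⁆` is compactly generated (Schreier) and, by induction, satisfies
the hypotheses above. Finally, a compact set `K` lies in the open, hence closed, subgroup
`⟨K ∪ V⟩`.
-/

open scoped Pointwise commutatorElement

namespace Subgroup

variable {G : Type*} [Group G]

/-- Unlike `derivedSeries H`, these are subgroups of `G`, so they can be compared for different
`H`. -/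
def derivedSeries (H : Subgroup G) : ℕ → Subgroup G
  | 0 => H
  | n + 1 => ⁅H.derivedSeries n, H.derivedSeries n⁆

theorem derivedSeries_succ' (H : Subgroup G) (n : ℕ) :
    H.derivedSeries (n + 1) = (⁅H, H⁆ : Subgroup G).derivedSeries n := by
  induction n with
  | zero => rfl
  | succ n ih => rw [derivedSeries, ih, derivedSeries]

theorem derivedSeries_mono {H K : Subgroup G} (h : H ≤ K) (n : ℕ) :
    H.derivedSeries n ≤ K.derivedSeries n := by
  induction n with
  | zero => exact h
  | succ n ih => exact commutator_mono ih ih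

theorem top_derivedSeries (n : ℕ) :
    (⊤ : Subgroup G).derivedSeries n = _root_.derivedSeries G n := by
  induction n with
  | zero => rfl
  | succ n ih => rw [derivedSeries, ih, derivedSeries_succ]

theorem map_subtype_derivedSeries (H : Subgroup G) (n : ℕ) :
    (_root_.derivedSeries H n).map H.subtype = H.derivedSeries n := by
  induction n with
  | zero => rw [derivedSeries_zero, ← MonoidHom.range_eq_map, range_subtype]; rfl
  | succ n ih => rw [derivedSeries_succ, map_commutator, ih, derivedSeries]

theorem derivedSeries_eq_bot_iff (H : Subgroup G) (n : ℕ) :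
    H.derivedSeries n = ⊥ ↔ _root_.derivedSeries H n = ⊥ := by
  rw [← map_subtype_derivedSeries, map_eq_bot_iff_of_injective _ H.subtype_injective]

theorem isSolvable_iff_exists_derivedSeries_eq_bot (H : Subgroup G) :
    Group.IsSolvable H ↔ ∃ n, H.derivedSeries n = ⊥ := by
  simp only [Group.isSolvable_def, derivedSeries_eq_bot_iff]

theorem coe_closure_subset_mul {E : Subgroup G} {A : Set G} (h1 : (1 : G) ∈ A)
    (hinv : ∀ a ∈ A, a⁻¹ ∈ A) (hconj : ∀ e ∈ E, ∀ a ∈ A, e⁻¹ * a * e ∈ A)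
    (hAA : A * A ⊆ E * A) : (closure A : Set G) ⊆ E * A := by
  have mul_left : ∀ a ∈ A, ∀ y ∈ (E : Set G) * A, a * y ∈ (E : Set G) * A := by
    rintro a ha _ ⟨e, he, b, hb, rfl⟩
    obtain ⟨e', he', c, hc, hc'⟩ := hAA (Set.mul_mem_mul (hconj e he a ha) hb)
    refine ⟨e * e', mul_mem he he', c, hc, ?_⟩
    simp only at hc' ⊢
    rw [mul_assoc, hc']
    group
  intro x hx
  induction hx using closure_induction_left with
  | one => exact ⟨1, one_mem E, 1, h1, one_mul 1⟩
  | mul_left a ha y _ ih => exact mul_left a ha y ih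
  | inv_mul_cancel a ha y _ ih => exact mul_left a⁻¹ (hinv a ha) y ih

theorem le_closure_inv_mul_mul_inter {N : Subgroup G} {S T : Set G} (h1S : (1 : G) ∈ S)
    (h1T : (1 : G) ∈ T) (hT : ∀ g ∈ closure S, ∃ t ∈ T, g * t ∈ N) (hN : N ≤ closure S) :
    N ≤ closure ((T⁻¹ * (S ∪ S⁻¹) * T) ∩ N) := by
  set R := (T⁻¹ * (S ∪ S⁻¹) * T) ∩ N
  have mem_R : ∀ t ∈ T, ∀ s ∈ S ∪ S⁻¹, ∀ t' ∈ T, t⁻¹ * s * t' ∈ N → t⁻¹ * s * t' ∈ R :=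
    fun t ht s hs t' ht' h ↦
      ⟨Set.mul_mem_mul (Set.mul_mem_mul (Set.inv_mem_inv.2 ht) hs) ht', h⟩
  have step : ∀ g ∈ closure S, (∀ t ∈ T, g * t ∈ N → g * t ∈ closure R) →
      ∀ s ∈ S ∪ S⁻¹, ∀ t' ∈ T, g * s * t' ∈ N → g * s * t' ∈ closure R := by
    intro g hg ih s hs t' ht' hgst
    obtain ⟨t, ht, hgt⟩ := hT g hg
    have hst : t⁻¹ * s * t' ∈ N := by
      simpa [mul_assoc] using mul_mem (inv_mem hgt) hgst
    have : g * s * t' = g * t * (t⁻¹ * s * t') := by group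
    rw [this]
    exact mul_mem (ih t ht hgt) (subset_closure (mem_R t ht s hs t' ht' hst))
  have key : ∀ g ∈ closure S, ∀ t ∈ T, g * t ∈ N → g * t ∈ closure R := by
    intro g hg
    induction hg using closure_induction_right with
    | one =>
      intro t ht htN
      have := mem_R 1 h1T 1 (Or.inl h1S) t ht (by simpa using htN)
      exact subset_closure (by simpa using this)
    | mul_right g hg s hs ih => exact step g hg ih s (Or.inl hs)
    | mul_inv_cancel g hg s hs ih => exact step g hg ih s⁻¹ (Or.inr (Set.inv_mem_inv.2 hs))
  intro d hd
  simpa using key d (hN hd) 1 h1T (by simpa using hd)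

end Subgroup

theorem Group.IsSolvable.finite_of_fg_of_isMulTorsion (Γ : Type*) [Group Γ] [Group.FG Γ]
    [Group.IsSolvable Γ] (hΓ : IsMulTorsion Γ) : Finite Γ := by
  obtain ⟨n, hn⟩ := (Group.isSolvable_def Γ).1 ‹_›
  induction n generalizing Γ with
  | zero =>
    have : Subsingleton (Subgroup Γ) := subsingleton_of_bot_eq_top (hn ▸ derivedSeries_zero Γ)
    have : Subsingleton Γ := Subgroup.subsingleton_iff.1 this
    exact Finite.of_subsingleton
  | succ n ih =>
    have : Group.FG (Abelianization Γ) := Group.fg_of_surjective (QuotientGroup.mk'_surjective _)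
    have : Finite (Γ ⧸ commutator Γ) := CommGroup.finite_of_fg_isMulTorsion (Abelianization Γ)
      (hΓ.of_surjective (QuotientGroup.mk'_surjective _))
    have : (commutator Γ).FiniteIndex := Subgroup.finiteIndex_of_finite_quotient
    have hA : derivedSeries (commutator Γ) n = ⊥ := by
      rw [← Subgroup.derivedSeries_eq_bot_iff, commutator_def, ← Subgroup.derivedSeries_succ',
        Subgroup.top_derivedSeries, hn]
    have : Finite (commutator Γ) := ih _ (hΓ.subgroup _) hA
    exact Finite.of_subgroup_quotient (commutator Γ)

theorem LocallySolvable.subgroup {G : Type u} [Group G] (hsolv : LocallySolvable G)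
    (D : Subgroup G) : LocallySolvable D := fun s ↦
  have : Group.IsSolvable _ := hsolv (s.map (Function.Embedding.subtype _))
  Group.isSolvable_of_isSolvable_injective
    (f := (D.subtype.comp (Subgroup.closure (s : Set D)).subtype).codRestrict
      (Subgroup.closure ((s.map (Function.Embedding.subtype _) : Finset G) : Set G)) fun x ↦ by
        simpa [MonoidHom.map_closure] using Subgroup.mem_map_of_mem D.subtype x.2)
    fun x y h ↦ Subtype.ext (Subtype.ext (by simpa using congrArg Subtype.val h))

section Restriction

variable {G : Type u} [Group G] [TopologicalSpace G]

theorem CompactlyCovered.subgroup (hcc : CompactlyCovered G) {D : Subgroup G}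
    (hD : IsClosed (D : Set G)) : CompactlyCovered D := fun g ↦
  let ⟨C, hC, hgC⟩ := hcc g
  ⟨C.subgroupOf D, hD.isClosedEmbedding_subtypeVal.isCompact_preimage hC, hgC⟩

theorem IsBalancedGroup.subgroup (hbal : IsBalancedGroup G) (D : Subgroup G) :
    IsBalancedGroup D := by
  intro U hU
  obtain ⟨U', hU', hU'U⟩ := (mem_nhds_subtype _ _ _).1 hU
  obtain ⟨V, hV, hVU', hVconj⟩ := hbal U' hU'
  exact ⟨Subtype.val ⁻¹' V, continuous_subtype_val.continuousAt.preimage_mem_nhds hV,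
    (Set.preimage_mono hVU').trans hU'U, fun g x hx ↦ by simpa using hVconj g x hx⟩

end Restriction

section TopologicalGroup

variable {G : Type*} [Group G] [TopologicalSpace G] [IsTopologicalGroup G]

theorem Subgroup.commutator_topologicalClosure_le (H K : Subgroup G) :
    ⁅H.topologicalClosure, K.topologicalClosure⁆ ≤ ⁅H, K⁆.topologicalClosure :=
  commutator_le.2 fun _ hx _ hy ↦ map_mem_closure₂ (u := ((⁅H, K⁆ : Subgroup G) : Set G))
    (by simp only [Function.uncurry_def, commutatorElement_def]; fun_prop) hx hy
    fun _ ha _ hb ↦ commutator_mem_commutator ha hb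

theorem Subgroup.derivedSeries_topologicalClosure_le (H : Subgroup G) (n : ℕ) :
    H.topologicalClosure.derivedSeries n ≤ (H.derivedSeries n).topologicalClosure := by
  induction n with
  | zero => exact le_rfl
  | succ n ih => exact (commutator_mono ih ih).trans (commutator_topologicalClosure_le _ _)

theorem Subgroup.topologicalClosure_bot [T1Space G] :
    (⊥ : Subgroup G).topologicalClosure = ⊥ :=
  SetLike.coe_injective <| by rw [coe_topologicalClosure_bot, closure_singleton, coe_bot]

theorem Subgroup.topologicalClosure_closure_le {s V : Set G} (hV : V ∈ 𝓝 1)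
    (hVinv : ∀ x ∈ V, x⁻¹ ∈ V) :
    (closure s).topologicalClosure ≤ closure (s ∪ V ∩ (closure s).topologicalClosure) := by
  intro x hx
  obtain ⟨h, hh, v, hv, rfl⟩ := closure_subset_mul_right_of_mem_nhds_one_of_inv _ hV hVinv hx
  have hv' : v ∈ (closure s).topologicalClosure := by
    simpa using mul_mem (inv_mem (le_topologicalClosure _ hh)) hx
  exact mul_mem (closure_mono Set.subset_union_left hh) (subset_closure (Or.inr ⟨hv, hv'⟩))

theorem IsCompact.exists_finite_subset_mul {K V : Set G} (hK : IsCompact K) (hV : V ∈ 𝓝 1) :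
    ∃ T : Set G, T.Finite ∧ K ⊆ T * V := by
  obtain ⟨t, ht⟩ := compact_covered_by_mul_left_translates hK
    ⟨1, mem_interior_iff_mem_nhds.2 hV⟩
  refine ⟨(t : Set G)⁻¹, t.finite_toSet.inv, fun k hk ↦ ?_⟩
  obtain ⟨g, hg, hgk⟩ := Set.mem_iUnion₂.1 (ht hk)
  exact ⟨g⁻¹, by simpa using hg, g * k, hgk, by group⟩

theorem Subgroup.exists_isCompact_closure_eq_of_coe_eq_mul {N : Subgroup G} {S K : Set G}
    (hS : IsCompact S) (h1S : (1 : G) ∈ S) (hK : IsCompact K) (hN : IsClosed (N : Set G))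
    (hNS : N ≤ closure S) (hSKN : (closure S : Set G) = K * N) :
    ∃ R : Set G, IsCompact R ∧ closure R = N := by
  have hT : ∀ g ∈ closure S, ∃ t ∈ insert 1 K, g * t ∈ N := by
    intro g hg
    have : g⁻¹ ∈ (closure S : Set G) := inv_mem hg
    rw [hSKN] at this
    obtain ⟨k, hk, n, hn, hkn⟩ := this
    refine ⟨k, Set.mem_insert_of_mem _ hk, ?_⟩
    rw [← inv_inv g, ← hkn]
    simpa using inv_mem hn
  refine ⟨_, ((((hK.insert 1).inv.mul (hS.union hS.inv)).mul (hK.insert 1)).inter_right hN),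
    le_antisymm ((closure_le N).2 Set.inter_subset_right)
      (le_closure_inv_mul_mul_inter h1S (Set.mem_insert _ _) hT hNS)⟩

end TopologicalGroup

section CompactlyCovered

variable {G : Type u} [Group G] [TopologicalSpace G] [IsTopologicalGroup G]

theorem IsBalancedGroup.exists_isCompact_mem_nhds_one [LocallyCompactSpace G]
    (h : IsBalancedGroup G) : ∃ V : Set G, IsCompact V ∧ V ∈ 𝓝 1 ∧ (∀ x ∈ V, x⁻¹ ∈ V) ∧
      ∀ g, ∀ x ∈ V, g * x * g⁻¹ ∈ V := by
  obtain ⟨C, hC, hC1⟩ := exists_compact_mem_nhds (1 : G)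
  obtain ⟨V, hV1, hVC, hV⟩ := h C hC1
  refine ⟨closure (V ∩ V⁻¹), hC.closure_of_subset (Set.inter_subset_left.trans hVC),
    mem_of_superset (inter_mem hV1 (inv_mem_nhds_one G hV1)) subset_closure,
    fun x hx ↦ map_mem_closure continuous_inv hx fun y hy ↦ ⟨hy.2, by simpa using hy.1⟩,
    fun g x hx ↦ map_mem_closure (f := fun y ↦ g * y * g⁻¹) (by fun_prop) hx
      fun y hy ↦ ⟨hV g y hy.1, ?_⟩⟩
  simpa [mul_assoc] using hV g y⁻¹ hy.2

theorem compactSpace_of_closure_eq_top [LocallyCompactSpace G] (hcc : CompactlyCovered G)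
    (hsolv : LocallySolvable G) (hbal : IsBalancedGroup G)
    (hfg : ∀ F : Finset G,
      ∃ C : Subgroup G, IsCompact (C : Set G) ∧ Subgroup.closure (F : Set G) ≤ C)
    {S : Set G} (hS : IsCompact S) (hgen : Subgroup.closure S = ⊤) : CompactSpace G := by
  obtain ⟨V, hVc, hV1, hVinv, hVconj⟩ := hbal.exists_isCompact_mem_nhds_one
  set W := Subgroup.closure V
  have : W.Normal := Subgroup.normalizer_eq_top_iff.1 <| eq_top_iff.2 <|
    Subgroup.le_normalizer_closure_iff.2 fun g _ x hx ↦ Subgroup.subset_closure (hVconj g x hx)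
  have hW1 : (W : Set G) ∈ 𝓝 1 := mem_of_superset hV1 Subgroup.subset_closure
  have hWo : IsOpen (W : Set G) := W.isOpen_of_mem_nhds hW1
  have hWc : IsCompact (W : Set G) := by
    obtain ⟨F, hF, hVV⟩ := (hVc.mul hVc).exists_finite_subset_mul hV1
    obtain ⟨C, hC, hFC⟩ := hfg hF.toFinset
    have hFC' : F ⊆ C := fun f hf ↦ hFC (Subgroup.subset_closure (by simpa using hf))
    refine (hC.mul hVc).of_isClosed_subset (W.isClosed_of_isOpen hWo) <|
      Subgroup.coe_closure_subset_mul (mem_of_mem_nhds hV1) hVinv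
        (fun e _ a ha ↦ by simpa using hVconj e⁻¹ a ha) (hVV.trans (Set.mul_subset_mul_right hFC'))
  have htors : IsMulTorsion (G ⧸ W) := by
    refine fun q ↦ QuotientGroup.induction_on q fun x ↦ ?_
    obtain ⟨C, hC, hxC⟩ := hcc x
    obtain ⟨T, hT, hCT⟩ := hC.exists_finite_subset_mul hW1
    refine finite_powers.1 ((hT.image QuotientGroup.mk).subset ?_)
    rintro _ ⟨n, rfl⟩
    obtain ⟨t, ht, w, hw, htw⟩ := hCT (pow_mem hxC n)
    refine ⟨t, ht, ?_⟩
    simp only at htw ⊢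
    rw [← QuotientGroup.mk_pow, ← htw, QuotientGroup.mk_mul_of_mem t hw]
  obtain ⟨T, hT, hST⟩ := hS.exists_finite_subset_mul hW1
  let φ := (QuotientGroup.mk' W).comp (Subgroup.closure (hT.toFinset : Set G)).subtype
  have hφ : Function.Surjective φ := by
    have hle : Subgroup.closure S ≤ Subgroup.closure (hT.toFinset : Set G) ⊔ W := by
      rw [Subgroup.closure_le, Subgroup.mul_normal]
      exact hST.trans <| Set.mul_subset_mul_right fun t ht ↦
        Subgroup.subset_closure (by simpa using ht)
    rw [← MonoidHom.range_eq_top, MonoidHom.range_comp, Subgroup.range_subtype, eq_top_iff,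
      ← Subgroup.map_top_of_surjective _ (QuotientGroup.mk'_surjective W), ← hgen]
    simpa [Subgroup.map_sup] using Subgroup.map_mono (f := QuotientGroup.mk' W) hle
  have : Group.FG (G ⧸ W) := Group.fg_of_surjective hφ
  have : Group.IsSolvable (G ⧸ W) :=
    have : Group.IsSolvable _ := hsolv hT.toFinset
    Group.isSolvable_of_surjective hφ
  have : Finite (G ⧸ W) := Group.IsSolvable.finite_of_fg_of_isMulTorsion _ htors
  refine isCompact_univ_iff.1 <| ((Set.finite_range fun q : G ⧸ W ↦ q.out).isCompact.mul hWc)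
    |>.of_isClosed_subset isClosed_univ fun g _ ↦ ?_
  obtain ⟨w, hw⟩ := QuotientGroup.mk_out_eq_mul W g
  exact ⟨_, ⟨(g : G ⧸ W), rfl⟩, w⁻¹, inv_mem w.2, by simp only [hw, mul_inv_cancel_right]⟩

theorem isCompact_closure_of_isClosed [LocallyCompactSpace G] (hcc : CompactlyCovered G)
    (hsolv : LocallySolvable G) (hbal : IsBalancedGroup G) {S : Set G} (hS : IsCompact S)
    (hSc : IsClosed (Subgroup.closure S : Set G))
    (hfg : ∀ F : Finset G, (F : Set G) ⊆ Subgroup.closure S →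
      ∃ C : Subgroup G, IsCompact (C : Set G) ∧ Subgroup.closure (F : Set G) ≤ C) :
    IsCompact (Subgroup.closure S : Set G) := by
  have he := hSc.isClosedEmbedding_subtypeVal
  have : LocallyCompactSpace (Subgroup.closure S) := he.locallyCompactSpace
  have : CompactSpace (Subgroup.closure S) := by
    refine compactSpace_of_closure_eq_top (hcc.subgroup hSc) (hsolv.subgroup _)
      (hbal.subgroup _) (fun F ↦ ?_) (he.isCompact_preimage hS)
      Subgroup.closure_closure_coe_preimage
    obtain ⟨C, hC, hFC⟩ := hfg (F.map (Function.Embedding.subtype _)) fun _ hx ↦ by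
      obtain ⟨y, -, rfl⟩ := Finset.mem_map.1 hx
      exact y.2
    exact ⟨C.subgroupOf _, he.isCompact_preimage hC, (Subgroup.closure_le _).2 fun x hx ↦
      hFC (Subgroup.subset_closure (by simpa using hx))⟩
  simpa using isCompact_range continuous_subtype_val (X := Subgroup.closure S)

theorem Subgroup.exists_isCompact_coe_eq_mul (hcc : CompactlyCovered G) {B N : Subgroup G}
    (hNB : N ≤ B) (hBN : ⁅B, B⁆ ≤ N) (hB : IsClosed (B : Set G)) (s : Finset G)
    (hs : (s : Set G) ⊆ B) :
    ∃ M : Subgroup G, N ≤ M ∧ M ≤ B ∧ (s : Set G) ⊆ M ∧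
      ∃ K : Set G, IsCompact K ∧ (M : Set G) = K * N := by
  classical
  induction s using Finset.induction_on with
  | empty => exact ⟨N, le_rfl, hNB, by simp, {1}, isCompact_singleton, by simp⟩
  | insert a s _ ih =>
    simp only [Finset.coe_insert, Set.insert_subset_iff] at hs ⊢
    obtain ⟨M, hNM, hMB, hsM, K, hK, hMK⟩ := ih hs.2
    obtain ⟨C, hC, haC⟩ := hcc a
    have hnorm : C ⊓ B ≤ normalizer (M : Set G) := le_normalizer_iff_commutator_le_right.2 <|
      (commutator_mono inf_le_right hMB).trans (hBN.trans hNM)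
    refine ⟨C ⊓ B ⊔ M, hNM.trans le_sup_right, sup_le inf_le_right hMB,
      ⟨mem_sup_left ⟨haC, hs.1⟩, hsM.trans (SetLike.coe_mono le_sup_right)⟩,
      ((C : Set G) ∩ B) * K, (hC.inter_right hB).mul hK, ?_⟩
    rw [coe_mul_of_left_le_normalizer_right _ _ hnorm, hMK, coe_inf, mul_assoc]

theorem Subgroup.exists_isCompact_coe_topologicalClosure_eq_mul (hcc : CompactlyCovered G)
    (F : Finset G) :
    ∃ K : Set G, IsCompact K ∧ ((closure (F : Set G)).topologicalClosure : Set G) =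
      K * (⁅closure (F : Set G), closure (F : Set G)⁆ : Subgroup G).topologicalClosure := by
  set H := closure (F : Set G)
  obtain ⟨M, hNM, hMB, hFM, K, hK, hMK⟩ := exists_isCompact_coe_eq_mul hcc
    (topologicalClosure_mono ((commutator_le_sup H H).trans_eq (sup_idem H)))
    (commutator_topologicalClosure_le H H) H.isClosed_topologicalClosure F
    (subset_closure.trans (SetLike.coe_mono H.le_topologicalClosure))
  have hMc : IsClosed (M : Set G) :=
    hMK ▸ (isClosed_topologicalClosure _).mul_left_of_isCompact hK
  refine ⟨K, hK, ?_⟩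
  rw [← hMK, le_antisymm (topologicalClosure_minimal _ ((closure_le M).2 hFM) hMc) hMB]

variable [T1Space G] [LocallyCompactSpace G]

theorem exists_isCompact_le_of_derivedSeries_eq_bot (hcc : CompactlyCovered G)
    (hsolv : LocallySolvable G) (hbal : IsBalancedGroup G) (n : ℕ) (F : Finset G)
    (hF : (Subgroup.closure (F : Set G)).derivedSeries n = ⊥) :
    ∃ C : Subgroup G, IsCompact (C : Set G) ∧ Subgroup.closure (F : Set G) ≤ C := by
  induction n generalizing F with
  | zero => exact ⟨⊥, by simp, hF.le⟩
  | succ n ih =>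
    set H := Subgroup.closure (F : Set G)
    obtain ⟨V, hVc, hV1, hVinv, -⟩ := hbal.exists_isCompact_mem_nhds_one
    obtain ⟨K, hK, hHK⟩ := Subgroup.exists_isCompact_coe_topologicalClosure_eq_mul hcc F
    have hgen : Subgroup.closure ((F : Set G) ∪ V ∩ H.topologicalClosure) =
        H.topologicalClosure :=
      le_antisymm ((Subgroup.closure_le _).2 (Set.union_subset
        (Subgroup.subset_closure.trans (SetLike.coe_mono H.le_topologicalClosure))
        Set.inter_subset_right)) (Subgroup.topologicalClosure_closure_le hV1 hVinv)
    obtain ⟨R, hR, hRN⟩ := Subgroup.exists_isCompact_closure_eq_of_coe_eq_mul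
      (F.finite_toSet.isCompact.union (hVc.inter_right H.isClosed_topologicalClosure))
      (Or.inr ⟨mem_of_mem_nhds hV1, one_mem _⟩) hK (Subgroup.isClosed_topologicalClosure _)
      ((Subgroup.topologicalClosure_mono
        ((Subgroup.commutator_le_sup H H).trans_eq (sup_idem H))).trans hgen.ge)
      (by rw [hgen]; exact hHK)
    have hN : IsCompact ((⁅H, H⁆ : Subgroup G).topologicalClosure : Set G) := by
      rw [← hRN]
      refine isCompact_closure_of_isClosed hcc hsolv hbal hR
        (hRN ▸ Subgroup.isClosed_topologicalClosure _) fun F' hF' ↦ ih F' <| le_bot_iff.1 ?_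
      calc (Subgroup.closure (F' : Set G)).derivedSeries n
          ≤ (⁅H, H⁆ : Subgroup G).topologicalClosure.derivedSeries n :=
            Subgroup.derivedSeries_mono (hRN ▸ (Subgroup.closure_le _).2 hF') n
        _ ≤ ((⁅H, H⁆ : Subgroup G).derivedSeries n).topologicalClosure :=
            Subgroup.derivedSeries_topologicalClosure_le _ n
        _ = ⊥ := by rw [← Subgroup.derivedSeries_succ', hF, Subgroup.topologicalClosure_bot]
    exact ⟨H.topologicalClosure, hHK ▸ hK.mul hN, H.le_topologicalClosure⟩

theorem exists_isCompact_closure_le (hcc : CompactlyCovered G) (hsolv : LocallySolvable G)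
    (hbal : IsBalancedGroup G) (F : Finset G) :
    ∃ C : Subgroup G, IsCompact (C : Set G) ∧ Subgroup.closure (F : Set G) ≤ C :=
  have ⟨n, hn⟩ := (Subgroup.isSolvable_iff_exists_derivedSeries_eq_bot _).1 (hsolv F)
  exists_isCompact_le_of_derivedSeries_eq_bot hcc hsolv hbal n F hn

end CompactlyCovered

/-- In a compactly covered, locally compact, locally solvable, balanced
topological group every compact subset is contained in a compact open subgroup. -/
theorem compact_subset_subset_compact_open_subgroup {G : Type u} [Group G]
    [TopologicalSpace G] [IsTopologicalGroup G] [T2Space G] [LocallyCompactSpace G]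
    (hcc : CompactlyCovered G) (hsolv : LocallySolvable G) (hbal : IsBalancedGroup G) :
    ∀ K : Set G, IsCompact K →
      ∃ H : Subgroup G, IsCompact (H : Set G) ∧ IsOpen (H : Set G) ∧ K ⊆ H := by
  intro K hK
  obtain ⟨V, hV, hV1⟩ := exists_compact_mem_nhds (1 : G)
  set H := Subgroup.closure (K ∪ V)
  have hHo : IsOpen (H : Set G) := H.isOpen_of_mem_nhds <|
    mem_of_superset hV1 (Set.subset_union_right.trans Subgroup.subset_closure)
  exact ⟨H, isCompact_closure_of_isClosed hcc hsolv hbal (hK.union hV) (H.isClosed_of_isOpen hHo)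
    fun F _ ↦ exists_isCompact_closure_le hcc hsolv hbal F, hHo,
    Set.subset_union_left.trans Subgroup.subset_closure⟩
end
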